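/- If κ_m(h₀) > 0 for some h₀ > 0, then κ_m(h) > 0 for every h > 0. -/

import Mathlib

/-!
Since `min 1 (h₀ / h) * (μ C + h) ≤ μ C + h₀`, every ratio `|∫_C f| / (μ C + h)` is at least
`min 1 (h₀ / h)` times the corresponding ratio for `h₀`. Hence `|f|_h ≥ min 1 (h₀ / h) * |f|_{h₀}`,
and taking infima, `κ_m(h) ≥ min 1 (h₀ / h) * κ_m(h₀) > 0`.
-/

open MeasureTheory Set

/-- The semi-norm `|f|_h = sup_{C ∈ 𝒞} |∫_C f dμ| / (μ(C) + h)`. -/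
noncomputable def normH {E : Type*} [MeasurableSpace E] (μ : Measure E)
    (𝒞 : Set (Set E)) (f : E → ℝ) (h : ℝ) : ℝ :=
  ⨆ C : 𝒞, |∫ x in (C : Set E), f x ∂μ| / ((μ (C : Set E)).toReal + h)

/-- `κ_m(h) = inf_{p,q ∈ m, ‖p-q‖_∞ > 0} |p-q|_h / ‖p-q‖_∞`. -/
noncomputable def kappa {E : Type*} [MeasurableSpace E] (μ : Measure E)
    (𝒞 : Set (Set E)) (m : Set (E → ℝ)) (h : ℝ) : ℝ :=
  sInf {x : ℝ | ∃ p ∈ m, ∃ q ∈ m, 0 < (eLpNorm (p - q) ⊤ μ).toReal ∧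
    x = normH μ 𝒞 (p - q) h / (eLpNorm (p - q) ⊤ μ).toReal}

-- The upper bound `g ≤ d f` handles unbounded `g`, whose supremum is the junk value `0`.
lemma Real.mul_iSup_le_iSup_of_le_of_le_mul {ι : Sort*} {f g : ι → ℝ} {c d : ℝ}
    (hc : 0 ≤ c) (hd : 0 ≤ d) (hfg : ∀ i, c * f i ≤ g i) (hgf : ∀ i, g i ≤ d * f i) :
    c * ⨆ i, f i ≤ ⨆ i, g i := by
  by_cases hg : BddAbove (range g)
  · rw [Real.mul_iSup_of_nonneg hc]
    exact ciSup_mono hg hfg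
  · have hf : ¬BddAbove (range f) := fun ⟨M, hM⟩ => hg ⟨d * M, forall_mem_range.2 fun i =>
      (hgf i).trans (mul_le_mul_of_nonneg_left (hM (mem_range_self i)) hd)⟩
    rw [Real.iSup_of_not_bddAbove hf, Real.iSup_of_not_bddAbove hg, mul_zero]

lemma min_one_div_mul_div_add_le_div_add {a t h₁ h₂ : ℝ} (ha : 0 ≤ a) (ht : 0 ≤ t)
    (hh₁ : 0 < h₁) (hh₂ : 0 < h₂) :
    min 1 (h₁ / h₂) * (a / (t + h₁)) ≤ a / (t + h₂) := by
  have hscale : min 1 (h₁ / h₂) * (t + h₂) ≤ t + h₁ := by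
    have ht' : min 1 (h₁ / h₂) * t ≤ t := mul_le_of_le_one_left ht (min_le_left _ _)
    have hh : min 1 (h₁ / h₂) * h₂ ≤ h₁ :=
      (mul_le_mul_of_nonneg_right (min_le_right _ _) hh₂.le).trans_eq (div_mul_cancel₀ _ hh₂.ne')
    linarith
  rw [mul_div_assoc', div_le_div_iff₀ (by linarith) (by linarith)]
  nlinarith [mul_le_mul_of_nonneg_left hscale ha]

section

variable {E : Type*} [MeasurableSpace E] (μ : Measure E) (𝒞 : Set (Set E))

lemma normH_nonneg (f : E → ℝ) {h : ℝ} (hh : 0 ≤ h) : 0 ≤ normH μ 𝒞 f h :=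
  Real.iSup_nonneg fun _ => div_nonneg (abs_nonneg _) (add_nonneg ENNReal.toReal_nonneg hh)

lemma min_one_div_mul_normH_le (f : E → ℝ) {h₁ h₂ : ℝ} (hh₁ : 0 < h₁) (hh₂ : 0 < h₂) :
    min 1 (h₁ / h₂) * normH μ 𝒞 f h₁ ≤ normH μ 𝒞 f h₂ := by
  have hc' : 0 < min 1 (h₂ / h₁) := lt_min one_pos (div_pos hh₂ hh₁)
  refine Real.mul_iSup_le_iSup_of_le_of_le_mul (lt_min one_pos (div_pos hh₁ hh₂)).le
    (inv_nonneg.2 hc'.le) (fun C => ?_) (fun C => (le_inv_mul_iff₀ hc').2 ?_)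
  · exact min_one_div_mul_div_add_le_div_add (abs_nonneg _) ENNReal.toReal_nonneg hh₁ hh₂
  · exact min_one_div_mul_div_add_le_div_add (abs_nonneg _) ENNReal.toReal_nonneg hh₂ hh₁

variable (m : Set (E → ℝ))

lemma kappa_le_div {h : ℝ} (hh : 0 ≤ h) {p q : E → ℝ} (hp : p ∈ m) (hq : q ∈ m)
    (hpq : 0 < (eLpNorm (p - q) ⊤ μ).toReal) :
    kappa μ 𝒞 m h ≤ normH μ 𝒞 (p - q) h / (eLpNorm (p - q) ⊤ μ).toReal := by
  refine csInf_le ⟨0, ?_⟩ ⟨p, hp, q, hq, hpq, rfl⟩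
  rintro _ ⟨p', -, q', -, hpq', rfl⟩
  exact div_nonneg (normH_nonneg μ 𝒞 _ hh) hpq'.le

lemma kappa_eq_zero_of_not_exists_pos
    (hm : ¬∃ p ∈ m, ∃ q ∈ m, 0 < (eLpNorm (p - q) ⊤ μ).toReal) (h : ℝ) :
    kappa μ 𝒞 m h = 0 := by
  rw [kappa]
  convert Real.sInf_empty
  refine eq_empty_iff_forall_notMem.2 ?_
  rintro _ ⟨p, hp, q, hq, hpq, -⟩
  exact hm ⟨p, hp, q, hq, hpq⟩

lemma min_one_div_mul_kappa_le {h₁ h₂ : ℝ} (hh₁ : 0 < h₁) (hh₂ : 0 < h₂) :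
    min 1 (h₁ / h₂) * kappa μ 𝒞 m h₁ ≤ kappa μ 𝒞 m h₂ := by
  by_cases hpair : ∃ p ∈ m, ∃ q ∈ m, 0 < (eLpNorm (p - q) ⊤ μ).toReal
  · obtain ⟨p, hp, q, hq, hpq⟩ := hpair
    refine le_csInf ⟨_, p, hp, q, hq, hpq, rfl⟩ ?_
    rintro _ ⟨p, hp, q, hq, hpq, rfl⟩
    calc min 1 (h₁ / h₂) * kappa μ 𝒞 m h₁
        ≤ min 1 (h₁ / h₂) * (normH μ 𝒞 (p - q) h₁ / (eLpNorm (p - q) ⊤ μ).toReal) :=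
          mul_le_mul_of_nonneg_left (kappa_le_div μ 𝒞 m hh₁.le hp hq hpq)
            (lt_min one_pos (div_pos hh₁ hh₂)).le
      _ = min 1 (h₁ / h₂) * normH μ 𝒞 (p - q) h₁ / (eLpNorm (p - q) ⊤ μ).toReal :=
          mul_div_assoc' _ _ _
      _ ≤ normH μ 𝒞 (p - q) h₂ / (eLpNorm (p - q) ⊤ μ).toReal := by
          gcongr
          exact min_one_div_mul_normH_le μ 𝒞 _ hh₁ hh₂
  · simp only [kappa_eq_zero_of_not_exists_pos μ 𝒞 m hpair, mul_zero, le_refl]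

end

theorem kappa_pos_of_pos_general {E : Type*} [MeasurableSpace E] (μ : Measure E)
    (𝒞 : Set (Set E)) (m : Set (E → ℝ))
    (h₀ : ℝ) (hh₀ : 0 < h₀) (hpos : 0 < kappa μ 𝒞 m h₀) :
    ∀ h : ℝ, 0 < h → 0 < kappa μ 𝒞 m h := fun h hh =>
  (mul_pos (lt_min one_pos (div_pos hh₀ hh)) hpos).trans_le
    (min_one_div_mul_kappa_le μ 𝒞 m hh₀ hh)

theorem kappa_pos_of_pos {E : Type*} [MeasurableSpace E] (μ : Measure E)
    [SigmaFinite μ] (𝒞 : Set (Set E)) (m : Set (E → ℝ))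
    (hm : ∀ f ∈ m, Integrable f μ ∧ MemLp f ⊤ μ)
    (h𝒞 : ∀ C ∈ 𝒞, μ C < ⊤)
    (h₀ : ℝ) (hh₀ : 0 < h₀) (hpos : 0 < kappa μ 𝒞 m h₀) :
    ∀ h : ℝ, 0 < h → 0 < kappa μ 𝒞 m h :=
  kappa_pos_of_pos_general μ 𝒞 m h₀ hh₀ hpos
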